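/- Let β be a real 3×3 matrix and S, P ∈ ℝ³. Assume the six scalar triple products (S, ββᵀS, (ββᵀ)²S), (P, βᵀβP, (βᵀβ)²P), (S, ββᵀS, βP), (βᵀS, P, βᵀβP), (βᵀS, βᵀβ(βᵀS), P), (S, βP, ββᵀ(βP)) are all zero. If there exist orthonormal eigenvectors e_x, e_y of ββᵀ such that both S and βP lie in the span of {e_x, e_y}, then there exist real numbers σ₁, σ₂, orthonormal vectors u₁, u₂ ∈ ℝ³, and orthonormal vectors v₁, v₂ ∈ ℝ³ with β v_i = σ_i u_i and βᵀ u_i = σ_i v_i for i = 1,2, such that S lies in the span of {u₁, u₂} and P lies in the span of {v₁, v₂}. -/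

import Mathlib

open Matrix

/-- Scalar triple product of three vectors in `ℝ³`. -/
def triple (a b c : Fin 3 → ℝ) : ℝ := a ⬝ᵥ (crossProduct b c)

lemma dotmv (M : Matrix (Fin 3) (Fin 3) ℝ) (a b : Fin 3 → ℝ) :
    a ⬝ᵥ (M *ᵥ b) = (Mᵀ *ᵥ a) ⬝ᵥ b := by
  rw [dotProduct_mulVec, mulVec_transpose]

lemma gram (u1 u2 u3 : Fin 3 → ℝ) (h1 : u1 ⬝ᵥ u1 = 1) (h2 : u2 ⬝ᵥ u2 = 1)
    (h3 : u3 ⬝ᵥ u3 = 1) (h12 : u1 ⬝ᵥ u2 = 0) (h13 : u1 ⬝ᵥ u3 = 0) (h23 : u2 ⬝ᵥ u3 = 0) :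
    (Matrix.of ![u1, u2, u3]) * (Matrix.of ![u1, u2, u3])ᵀ = 1 := by
  ext i j
  fin_cases i <;> fin_cases j <;>
    simp_all [Matrix.mul_apply, dotProduct, Fin.sum_univ_three, Matrix.one_apply,
      Matrix.transpose_apply, vecHead, vecTail, mul_comm]

lemma basis_zero (u1 u2 u3 x : Fin 3 → ℝ) (h1 : u1 ⬝ᵥ u1 = 1) (h2 : u2 ⬝ᵥ u2 = 1)
    (h3 : u3 ⬝ᵥ u3 = 1) (h12 : u1 ⬝ᵥ u2 = 0) (h13 : u1 ⬝ᵥ u3 = 0) (h23 : u2 ⬝ᵥ u3 = 0)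
    (hx1 : u1 ⬝ᵥ x = 0) (hx2 : u2 ⬝ᵥ x = 0) (hx3 : u3 ⬝ᵥ x = 0) : x = 0 := by
  set U : Matrix (Fin 3) (Fin 3) ℝ := Matrix.of ![u1, u2, u3] with hU
  have hG : U * Uᵀ = 1 := gram u1 u2 u3 h1 h2 h3 h12 h13 h23
  have hG' : Uᵀ * U = 1 := mul_eq_one_comm.mp hG
  have hUx : U *ᵥ x = 0 := by
    ext i
    fin_cases i
    · simpa [hU, Matrix.mulVec, dotProduct, Fin.sum_univ_three] using hx1
    · simpa [hU, Matrix.mulVec, dotProduct, Fin.sum_univ_three] using hx2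
    · simpa [hU, Matrix.mulVec, dotProduct, Fin.sum_univ_three] using hx3
  calc x = (Uᵀ * U) *ᵥ x := by rw [hG', Matrix.one_mulVec]
    _ = Uᵀ *ᵥ (U *ᵥ x) := by rw [Matrix.mulVec_mulVec]
    _ = 0 := by rw [hUx, Matrix.mulVec_zero]

lemma expand3 (u1 u2 u3 x : Fin 3 → ℝ) (h1 : u1 ⬝ᵥ u1 = 1) (h2 : u2 ⬝ᵥ u2 = 1)
    (h3 : u3 ⬝ᵥ u3 = 1) (h12 : u1 ⬝ᵥ u2 = 0) (h13 : u1 ⬝ᵥ u3 = 0) (h23 : u2 ⬝ᵥ u3 = 0) :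
    x = (u1 ⬝ᵥ x) • u1 + (u2 ⬝ᵥ x) • u2 + (u3 ⬝ᵥ x) • u3 := by
  have h := basis_zero u1 u2 u3 (x - ((u1 ⬝ᵥ x) • u1 + (u2 ⬝ᵥ x) • u2 + (u3 ⬝ᵥ x) • u3))
    h1 h2 h3 h12 h13 h23 ?_ ?_ ?_
  · exact sub_eq_zero.mp h
  · simp [dotProduct_add, dotProduct_sub, dotProduct_smul, h1, h12, h13, smul_eq_mul]
  · simp [dotProduct_add, dotProduct_sub, dotProduct_smul, h2, h23, smul_eq_mul,
      dotProduct_comm u2 u1, h12]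
  · simp [dotProduct_add, dotProduct_sub, dotProduct_smul, h3, smul_eq_mul,
      dotProduct_comm u3 u1, dotProduct_comm u3 u2, h13, h23]

lemma trip0 (w1 w2 w3 a b c : Fin 3 → ℝ) (a1 a2 a3 b1 b2 b3 c1 c2 c3 : ℝ)
    (h1 : w1 ⬝ᵥ w1 = 1) (h2 : w2 ⬝ᵥ w2 = 1) (h3 : w3 ⬝ᵥ w3 = 1)
    (h12 : w1 ⬝ᵥ w2 = 0) (h13 : w1 ⬝ᵥ w3 = 0) (h23 : w2 ⬝ᵥ w3 = 0)
    (ha : a = a1 • w1 + a2 • w2 + a3 • w3)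
    (hb : b = b1 • w1 + b2 • w2 + b3 • w3)
    (hc : c = c1 • w1 + c2 • w2 + c3 • w3)
    (h : triple a b c = 0) :
    Matrix.det !![a1, a2, a3; b1, b2, b3; c1, c2, c3] = 0 := by
  set W : Matrix (Fin 3) (Fin 3) ℝ := Matrix.of ![w1, w2, w3] with hW
  have hG : W * Wᵀ = 1 := gram w1 w2 w3 h1 h2 h3 h12 h13 h23
  have hdet : W.det * W.det = 1 := by
    have := congrArg Matrix.det hG
    rwa [Matrix.det_mul, Matrix.det_transpose, Matrix.det_one] at this
  have hWne : W.det ≠ 0 := by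
    intro h0
    rw [h0, mul_zero] at hdet
    norm_num at hdet
  have hfact : (![a, b, c] : Matrix (Fin 3) (Fin 3) ℝ) =
      !![a1, a2, a3; b1, b2, b3; c1, c2, c3] * W := by
    ext i j
    fin_cases i <;>
      simp [ha, hb, hc, hW, Matrix.mul_apply, Fin.sum_univ_three, Matrix.cons_val_zero,
        Matrix.cons_val_one, vecHead, vecTail]
  have h' : Matrix.det ![a, b, c] = 0 := by
    rw [← triple_product_eq_det]; exact h
  rw [hfact, Matrix.det_mul] at h'
  exact (mul_eq_zero.mp h').resolve_right hWne

lemma polar2 (x y : ℝ) : ∃ a g r : ℝ, a ^ 2 + g ^ 2 = 1 ∧ x = r * a ∧ y = r * g := by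
  by_cases h : x = 0 ∧ y = 0
  · exact ⟨1, 0, 0, by norm_num, by simp [h.1], by simp [h.2]⟩
  · have hr : 0 < Real.sqrt (x ^ 2 + y ^ 2) := by
      apply Real.sqrt_pos.mpr
      rcases not_and_or.mp h with h' | h' <;> positivity
    refine ⟨x / Real.sqrt (x ^ 2 + y ^ 2), y / Real.sqrt (x ^ 2 + y ^ 2),
      Real.sqrt (x ^ 2 + y ^ 2), ?_, by field_simp, by field_simp⟩
    have hs : Real.sqrt (x ^ 2 + y ^ 2) ^ 2 = x ^ 2 + y ^ 2 :=
      Real.sq_sqrt (by positivity)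
    rw [div_pow, div_pow, ← add_div, hs, div_self]
    rcases not_and_or.mp h with h' | h' <;> positivity

lemma bdot (β : Matrix (Fin 3) (Fin 3) ℝ) (u w : Fin 3 → ℝ) (t : ℝ)
    (he : (β * βᵀ) *ᵥ w = t • w) :
    (βᵀ *ᵥ u) ⬝ᵥ (βᵀ *ᵥ w) = t * (u ⬝ᵥ w) := by
  have h : (βᵀ *ᵥ u) ⬝ᵥ (βᵀ *ᵥ w) = u ⬝ᵥ (β *ᵥ (βᵀ *ᵥ w)) := by
    rw [dotmv β u (βᵀ *ᵥ w)]
  rw [h, Matrix.mulVec_mulVec, he, dotProduct_smul, smul_eq_mul]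

lemma zerov (β : Matrix (Fin 3) (Fin 3) ℝ) (u : Fin 3 → ℝ)
    (he : (β * βᵀ) *ᵥ u = (0:ℝ) • u) : βᵀ *ᵥ u = 0 := by
  have h := bdot β u u 0 he
  rw [zero_mul] at h
  exact dotProduct_self_eq_zero.mp h

lemma kerv (β : Matrix (Fin 3) (Fin 3) ℝ) (u1 u2 u3 v : Fin 3 → ℝ)
    (h1 : u1 ⬝ᵥ u1 = 1) (h2 : u2 ⬝ᵥ u2 = 1) (h3 : u3 ⬝ᵥ u3 = 1)
    (h12 : u1 ⬝ᵥ u2 = 0) (h13 : u1 ⬝ᵥ u3 = 0) (h23 : u2 ⬝ᵥ u3 = 0)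
    (hd1 : (βᵀ *ᵥ u1) ⬝ᵥ v = 0) (hd2 : (βᵀ *ᵥ u2) ⬝ᵥ v = 0)
    (hd3 : (βᵀ *ᵥ u3) ⬝ᵥ v = 0) : β *ᵥ v = 0 := by
  apply basis_zero u1 u2 u3 _ h1 h2 h3 h12 h13 h23
  · rw [dotmv]; exact hd1
  · rw [dotmv]; exact hd2
  · rw [dotmv]; exact hd3

lemma posv (β : Matrix (Fin 3) (Fin 3) ℝ) (u : Fin 3 → ℝ) (σ : ℝ) (hσ : 0 < σ)
    (hu : u ⬝ᵥ u = 1) (he : (β * βᵀ) *ᵥ u = (σ ^ 2) • u) :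
    (σ⁻¹ • (βᵀ *ᵥ u)) ⬝ᵥ (σ⁻¹ • (βᵀ *ᵥ u)) = 1 ∧
    β *ᵥ (σ⁻¹ • (βᵀ *ᵥ u)) = σ • u ∧ βᵀ *ᵥ u = σ • (σ⁻¹ • (βᵀ *ᵥ u)) := by
  have hne : σ ≠ 0 := ne_of_gt hσ
  have hd := bdot β u u (σ ^ 2) he
  refine ⟨?_, ?_, ?_⟩
  · rw [smul_dotProduct, dotProduct_smul, hd, hu, smul_eq_mul, smul_eq_mul]
    field_simp
  · rw [Matrix.mulVec_smul, Matrix.mulVec_mulVec, he, smul_smul]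
    rw [inv_mul_eq_div, pow_two, mul_div_assoc, div_self hne, mul_one]
  · rw [smul_smul, mul_inv_cancel₀ hne, one_smul]

lemma complete1 (v : Fin 3 → ℝ) (hv : v ⬝ᵥ v = 1) :
    ∃ w : Fin 3 → ℝ, w ⬝ᵥ w = 1 ∧ v ⬝ᵥ w = 0 := by
  by_cases h : v 1 = 0 ∧ v 2 = 0
  · refine ⟨![0, 1, 0], by simp [dotProduct, Fin.sum_univ_three], ?_⟩
    simp [dotProduct, Fin.sum_univ_three, h.1]
  · have hn : 0 < v 1 ^ 2 + v 2 ^ 2 := by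
      rcases not_and_or.mp h with h' | h' <;> positivity
    set s := Real.sqrt (v 1 ^ 2 + v 2 ^ 2) with hs
    have hspos : 0 < s := Real.sqrt_pos.mpr hn
    have hs2 : s ^ 2 = v 1 ^ 2 + v 2 ^ 2 := Real.sq_sqrt (le_of_lt hn)
    refine ⟨![0, -(v 2) / s, v 1 / s], ?_, ?_⟩
    · have : (0:ℝ) * 0 + -(v 2) / s * (-(v 2) / s) + v 1 / s * (v 1 / s)
          = (v 1 ^ 2 + v 2 ^ 2) / s ^ 2 := by ring
      simp only [dotProduct, Fin.sum_univ_three]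
      show (0:ℝ) * 0 + -(v 2) / s * (-(v 2) / s) + v 1 / s * (v 1 / s) = 1
      rw [this, hs2, div_self (ne_of_gt hn)]
    · simp only [dotProduct, Fin.sum_univ_three]
      show v 0 * 0 + v 1 * (-(v 2) / s) + v 2 * (v 1 / s) = 0
      ring

lemma crossfacts (a b : Fin 3 → ℝ) (ha : a ⬝ᵥ a = 1) (hb : b ⬝ᵥ b = 1) (hab : a ⬝ᵥ b = 0) :
    (crossProduct a b) ⬝ᵥ (crossProduct a b) = 1 ∧ a ⬝ᵥ (crossProduct a b) = 0 ∧
      b ⬝ᵥ (crossProduct a b) = 0 := by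
  refine ⟨?_, dot_self_cross a b, dot_cross_self a b⟩
  rw [cross_dot_cross, ha, hb, hab, dotProduct_comm b a, hab]
  ring

lemma vbasis (β : Matrix (Fin 3) (Fin 3) ℝ) (u1 u2 u3 : Fin 3 → ℝ) (σ1 σ2 σ3 : ℝ)
    (h1 : u1 ⬝ᵥ u1 = 1) (h2 : u2 ⬝ᵥ u2 = 1) (h3 : u3 ⬝ᵥ u3 = 1)
    (h12 : u1 ⬝ᵥ u2 = 0) (h13 : u1 ⬝ᵥ u3 = 0) (h23 : u2 ⬝ᵥ u3 = 0)
    (hs1 : 0 ≤ σ1) (hs2 : 0 ≤ σ2) (hs3 : 0 ≤ σ3)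
    (he1 : (β * βᵀ) *ᵥ u1 = (σ1 ^ 2) • u1)
    (he2 : (β * βᵀ) *ᵥ u2 = (σ2 ^ 2) • u2)
    (he3 : (β * βᵀ) *ᵥ u3 = (σ3 ^ 2) • u3) :
    ∃ v1 v2 v3 : Fin 3 → ℝ,
      v1 ⬝ᵥ v1 = 1 ∧ v2 ⬝ᵥ v2 = 1 ∧ v3 ⬝ᵥ v3 = 1 ∧
      v1 ⬝ᵥ v2 = 0 ∧ v1 ⬝ᵥ v3 = 0 ∧ v2 ⬝ᵥ v3 = 0 ∧
      β *ᵥ v1 = σ1 • u1 ∧ βᵀ *ᵥ u1 = σ1 • v1 ∧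
      β *ᵥ v2 = σ2 • u2 ∧ βᵀ *ᵥ u2 = σ2 • v2 ∧
      β *ᵥ v3 = σ3 • u3 ∧ βᵀ *ᵥ u3 = σ3 • v3 := by
  rcases hs1.eq_or_lt with hz1 | hp1
  · have hb1 : βᵀ *ᵥ u1 = 0 := zerov β u1 (by rw [← hz1] at he1; simpa using he1)
    rcases hs2.eq_or_lt with hz2 | hp2
    · have hb2 : βᵀ *ᵥ u2 = 0 := zerov β u2 (by rw [← hz2] at he2; simpa using he2)
      rcases hs3.eq_or_lt with hz3 | hp3
      · -- 000
        have hb3 : βᵀ *ᵥ u3 = 0 := zerov β u3 (by rw [← hz3] at he3; simpa using he3)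
        refine ⟨![1,0,0], ![0,1,0], ![0,0,1], ?_, ?_, ?_, ?_, ?_, ?_, ?_, ?_, ?_, ?_, ?_, ?_⟩
        · simp [dotProduct, Fin.sum_univ_three]
        · simp [dotProduct, Fin.sum_univ_three]
        · simp [dotProduct, Fin.sum_univ_three]
        · simp [dotProduct, Fin.sum_univ_three]
        · simp [dotProduct, Fin.sum_univ_three]
        · simp [dotProduct, Fin.sum_univ_three]
        · rw [← hz1, zero_smul]
          exact kerv β u1 u2 u3 _ h1 h2 h3 h12 h13 h23 (by rw [hb1]; simp)
            (by rw [hb2]; simp) (by rw [hb3]; simp)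
        · rw [hb1, ← hz1, zero_smul]
        · rw [← hz2, zero_smul]
          exact kerv β u1 u2 u3 _ h1 h2 h3 h12 h13 h23 (by rw [hb1]; simp)
            (by rw [hb2]; simp) (by rw [hb3]; simp)
        · rw [hb2, ← hz2, zero_smul]
        · rw [← hz3, zero_smul]
          exact kerv β u1 u2 u3 _ h1 h2 h3 h12 h13 h23 (by rw [hb1]; simp)
            (by rw [hb2]; simp) (by rw [hb3]; simp)
        · rw [hb3, ← hz3, zero_smul]
      · -- 00+
        obtain ⟨hvv3, hbv3, hbt3⟩ := posv β u3 σ3 hp3 h3 he3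
        set v3 := σ3⁻¹ • (βᵀ *ᵥ u3) with hv3def
        obtain ⟨w, hww, hv3w⟩ := complete1 v3 hvv3
        obtain ⟨hcc, hc1, hc2⟩ := crossfacts v3 w hvv3 hww hv3w
        set c := crossProduct v3 w with hcdef
        have hker : ∀ v : Fin 3 → ℝ, v3 ⬝ᵥ v = 0 → β *ᵥ v = 0 := by
          intro v hv
          refine kerv β u1 u2 u3 v h1 h2 h3 h12 h13 h23 (by rw [hb1]; simp)
            (by rw [hb2]; simp) ?_
          rw [hbt3, smul_dotProduct, hv, smul_zero]
        refine ⟨w, c, v3, hww, hcc, hvv3, ?_, ?_, ?_, ?_, ?_, ?_, ?_, hbv3, hbt3⟩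
        · exact hc2
        · rw [dotProduct_comm]; exact hv3w
        · rw [dotProduct_comm]; exact hc1
        · rw [← hz1, zero_smul]; exact hker w hv3w
        · rw [hb1, ← hz1, zero_smul]
        · rw [← hz2, zero_smul]; exact hker c hc1
        · rw [hb2, ← hz2, zero_smul]
    · -- σ2 > 0
      obtain ⟨hvv2, hbv2, hbt2⟩ := posv β u2 σ2 hp2 h2 he2
      set v2 := σ2⁻¹ • (βᵀ *ᵥ u2) with hv2def
      rcases hs3.eq_or_lt with hz3 | hp3
      · -- 0+0
        have hb3 : βᵀ *ᵥ u3 = 0 := zerov β u3 (by rw [← hz3] at he3; simpa using he3)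
        obtain ⟨w, hww, hv2w⟩ := complete1 v2 hvv2
        obtain ⟨hcc, hc1, hc2⟩ := crossfacts v2 w hvv2 hww hv2w
        set c := crossProduct v2 w with hcdef
        have hker : ∀ v : Fin 3 → ℝ, v2 ⬝ᵥ v = 0 → β *ᵥ v = 0 := by
          intro v hv
          refine kerv β u1 u2 u3 v h1 h2 h3 h12 h13 h23 (by rw [hb1]; simp) ?_
            (by rw [hb3]; simp)
          rw [hbt2, smul_dotProduct, hv, smul_zero]
        refine ⟨w, v2, c, hww, hvv2, hcc, ?_, ?_, ?_, ?_, ?_, ?_, ?_, ?_, ?_⟩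
        · rw [dotProduct_comm]; exact hv2w
        · exact hc2
        · exact hc1
        · rw [← hz1, zero_smul]; exact hker w hv2w
        · rw [hb1, ← hz1, zero_smul]
        · exact hbv2
        · exact hbt2
        · rw [← hz3, zero_smul]; exact hker c hc1
        · rw [hb3, ← hz3, zero_smul]
      · -- 0++
        obtain ⟨hvv3, hbv3, hbt3⟩ := posv β u3 σ3 hp3 h3 he3
        set v3 := σ3⁻¹ • (βᵀ *ᵥ u3) with hv3def
        have hv23 : v2 ⬝ᵥ v3 = 0 := by
          rw [hv2def, hv3def, smul_dotProduct, dotProduct_smul, bdot β u2 u3 _ he3, h23]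
          simp
        obtain ⟨hcc, hc1, hc2⟩ := crossfacts v2 v3 hvv2 hvv3 hv23
        set c := crossProduct v2 v3 with hcdef
        have hker : β *ᵥ c = 0 := by
          refine kerv β u1 u2 u3 c h1 h2 h3 h12 h13 h23 (by rw [hb1]; simp) ?_ ?_
          · rw [hbt2, smul_dotProduct, hc1, smul_zero]
          · rw [hbt3, smul_dotProduct, hc2, smul_zero]
        refine ⟨c, v2, v3, hcc, hvv2, hvv3, ?_, ?_, hv23, ?_, ?_, hbv2, hbt2, hbv3, hbt3⟩
        · rw [dotProduct_comm]; exact hc1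
        · rw [dotProduct_comm]; exact hc2
        · rw [← hz1, zero_smul]; exact hker
        · rw [hb1, ← hz1, zero_smul]
  · -- σ1 > 0
    obtain ⟨hvv1, hbv1, hbt1⟩ := posv β u1 σ1 hp1 h1 he1
    set v1 := σ1⁻¹ • (βᵀ *ᵥ u1) with hv1def
    rcases hs2.eq_or_lt with hz2 | hp2
    · have hb2 : βᵀ *ᵥ u2 = 0 := zerov β u2 (by rw [← hz2] at he2; simpa using he2)
      rcases hs3.eq_or_lt with hz3 | hp3
      · -- +00
        have hb3 : βᵀ *ᵥ u3 = 0 := zerov β u3 (by rw [← hz3] at he3; simpa using he3)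
        obtain ⟨w, hww, hv1w⟩ := complete1 v1 hvv1
        obtain ⟨hcc, hc1, hc2⟩ := crossfacts v1 w hvv1 hww hv1w
        set c := crossProduct v1 w with hcdef
        have hker : ∀ v : Fin 3 → ℝ, v1 ⬝ᵥ v = 0 → β *ᵥ v = 0 := by
          intro v hv
          refine kerv β u1 u2 u3 v h1 h2 h3 h12 h13 h23 ?_ (by rw [hb2]; simp)
            (by rw [hb3]; simp)
          rw [hbt1, smul_dotProduct, hv, smul_zero]
        refine ⟨v1, w, c, hvv1, hww, hcc, hv1w, hc1, ?_, hbv1, hbt1, ?_, ?_, ?_, ?_⟩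
        · exact hc2
        · rw [← hz2, zero_smul]; exact hker w hv1w
        · rw [hb2, ← hz2, zero_smul]
        · rw [← hz3, zero_smul]; exact hker c hc1
        · rw [hb3, ← hz3, zero_smul]
      · -- +0+
        obtain ⟨hvv3, hbv3, hbt3⟩ := posv β u3 σ3 hp3 h3 he3
        set v3 := σ3⁻¹ • (βᵀ *ᵥ u3) with hv3def
        have hv13 : v1 ⬝ᵥ v3 = 0 := by
          rw [hv1def, hv3def, smul_dotProduct, dotProduct_smul, bdot β u1 u3 _ he3, h13]
          simp
        obtain ⟨hcc, hc1, hc2⟩ := crossfacts v1 v3 hvv1 hvv3 hv13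
        set c := crossProduct v1 v3 with hcdef
        have hker : β *ᵥ c = 0 := by
          refine kerv β u1 u2 u3 c h1 h2 h3 h12 h13 h23 ?_ (by rw [hb2]; simp) ?_
          · rw [hbt1, smul_dotProduct, hc1, smul_zero]
          · rw [hbt3, smul_dotProduct, hc2, smul_zero]
        refine ⟨v1, c, v3, hvv1, hcc, hvv3, hc1, hv13, ?_, hbv1, hbt1, ?_, ?_, hbv3, hbt3⟩
        · rw [dotProduct_comm]; exact hc2
        · rw [← hz2, zero_smul]; exact hker
        · rw [hb2, ← hz2, zero_smul]
    · -- σ1, σ2 > 0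
      obtain ⟨hvv2, hbv2, hbt2⟩ := posv β u2 σ2 hp2 h2 he2
      set v2 := σ2⁻¹ • (βᵀ *ᵥ u2) with hv2def
      have hv12 : v1 ⬝ᵥ v2 = 0 := by
        rw [hv1def, hv2def, smul_dotProduct, dotProduct_smul, bdot β u1 u2 _ he2, h12]
        simp
      rcases hs3.eq_or_lt with hz3 | hp3
      · -- ++0
        have hb3 : βᵀ *ᵥ u3 = 0 := zerov β u3 (by rw [← hz3] at he3; simpa using he3)
        obtain ⟨hcc, hc1, hc2⟩ := crossfacts v1 v2 hvv1 hvv2 hv12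
        set c := crossProduct v1 v2 with hcdef
        have hker : β *ᵥ c = 0 := by
          refine kerv β u1 u2 u3 c h1 h2 h3 h12 h13 h23 ?_ ?_ (by rw [hb3]; simp)
          · rw [hbt1, smul_dotProduct, hc1, smul_zero]
          · rw [hbt2, smul_dotProduct, hc2, smul_zero]
        refine ⟨v1, v2, c, hvv1, hvv2, hcc, hv12, hc1, hc2, hbv1, hbt1, hbv2, hbt2, ?_, ?_⟩
        · rw [← hz3, zero_smul]; exact hker
        · rw [hb3, ← hz3, zero_smul]
      · -- +++
        obtain ⟨hvv3, hbv3, hbt3⟩ := posv β u3 σ3 hp3 h3 he3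
        set v3 := σ3⁻¹ • (βᵀ *ᵥ u3) with hv3def
        have hv13 : v1 ⬝ᵥ v3 = 0 := by
          rw [hv1def, hv3def, smul_dotProduct, dotProduct_smul, bdot β u1 u3 _ he3, h13]
          simp
        have hv23 : v2 ⬝ᵥ v3 = 0 := by
          rw [hv2def, hv3def, smul_dotProduct, dotProduct_smul, bdot β u2 u3 _ he3, h23]
          simp
        exact ⟨v1, v2, v3, hvv1, hvv2, hvv3, hv12, hv13, hv23, hbv1, hbt1, hbv2, hbt2,
          hbv3, hbt3⟩
theorem singular_pair_span_of_triple_invariants_vanish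
    (β : Matrix (Fin 3) (Fin 3) ℝ) (S P : Fin 3 → ℝ)
    (h10 : triple S ((β * βᵀ) *ᵥ S) (((β * βᵀ) * (β * βᵀ)) *ᵥ S) = 0)
    (h11 : triple P ((βᵀ * β) *ᵥ P) (((βᵀ * β) * (βᵀ * β)) *ᵥ P) = 0)
    (h15 : triple S ((β * βᵀ) *ᵥ S) (β *ᵥ P) = 0)
    (h16 : triple (βᵀ *ᵥ S) P ((βᵀ * β) *ᵥ P) = 0)
    (h17 : triple (βᵀ *ᵥ S) ((βᵀ * β) *ᵥ (βᵀ *ᵥ S)) P = 0)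
    (h18 : triple S (β *ᵥ P) ((β * βᵀ) *ᵥ (β *ᵥ P)) = 0)
    (hspan : ∃ ex ey : Fin 3 → ℝ,
      ex ⬝ᵥ ex = 1 ∧ ey ⬝ᵥ ey = 1 ∧ ex ⬝ᵥ ey = 0 ∧
      (∃ μ : ℝ, (β * βᵀ) *ᵥ ex = μ • ex) ∧ (∃ ν : ℝ, (β * βᵀ) *ᵥ ey = ν • ey) ∧
      (∃ c₁ c₂ : ℝ, S = c₁ • ex + c₂ • ey) ∧
      (∃ d₁ d₂ : ℝ, β *ᵥ P = d₁ • ex + d₂ • ey)) :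
    ∃ (σ₁ σ₂ : ℝ) (u₁ u₂ v₁ v₂ : Fin 3 → ℝ),
      u₁ ⬝ᵥ u₁ = 1 ∧ u₂ ⬝ᵥ u₂ = 1 ∧ u₁ ⬝ᵥ u₂ = 0 ∧
      v₁ ⬝ᵥ v₁ = 1 ∧ v₂ ⬝ᵥ v₂ = 1 ∧ v₁ ⬝ᵥ v₂ = 0 ∧
      β *ᵥ v₁ = σ₁ • u₁ ∧ βᵀ *ᵥ u₁ = σ₁ • v₁ ∧
      β *ᵥ v₂ = σ₂ • u₂ ∧ βᵀ *ᵥ u₂ = σ₂ • v₂ ∧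
      (∃ c₁ c₂ : ℝ, S = c₁ • u₁ + c₂ • u₂) ∧
      (∃ d₁ d₂ : ℝ, P = d₁ • v₁ + d₂ • v₂) := by
  obtain ⟨ex, ey, hex, hey, hxy, ⟨μ, hμ⟩, ⟨ν, hν⟩, ⟨c1, c2, hS⟩, ⟨d1, d2, hbP⟩⟩ := hspan
  obtain ⟨hu33, hu13, hu23⟩ := crossfacts ex ey hex hey hxy
  set u3 := crossProduct ex ey with hu3def
  have hsymm : (β * βᵀ)ᵀ = β * βᵀ := by
    rw [Matrix.transpose_mul, Matrix.transpose_transpose]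
  have dself : ∀ v : Fin 3 → ℝ, 0 ≤ v ⬝ᵥ v := by
    intro v
    exact Finset.sum_nonneg fun i _ => mul_self_nonneg (v i)
  -- third eigenvector
  have key := expand3 ex ey u3 ((β * βᵀ) *ᵥ u3) hex hey hu33 hxy hu13 hu23
  have dd1 : ex ⬝ᵥ ((β * βᵀ) *ᵥ u3) = 0 := by
    rw [dotmv, hsymm, hμ, smul_dotProduct, hu13, smul_zero]
  have dd2 : ey ⬝ᵥ ((β * βᵀ) *ᵥ u3) = 0 := by
    rw [dotmv, hsymm, hν, smul_dotProduct, hu23, smul_zero]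
  set lam := u3 ⬝ᵥ ((β * βᵀ) *ᵥ u3) with hlamdef
  have hlam : (β * βᵀ) *ᵥ u3 = lam • u3 := by
    have k := key
    rw [dd1, dd2] at k
    simpa using k
  -- nonnegativity of eigenvalues
  have hμnn : 0 ≤ μ := by
    have h1 : (βᵀ *ᵥ ex) ⬝ᵥ (βᵀ *ᵥ ex) = μ * (ex ⬝ᵥ ex) := bdot β ex ex μ hμ
    rw [hex, mul_one] at h1
    rw [← h1]; exact dself _
  have hνnn : 0 ≤ ν := by
    have h1 : (βᵀ *ᵥ ey) ⬝ᵥ (βᵀ *ᵥ ey) = ν * (ey ⬝ᵥ ey) := bdot β ey ey ν hν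
    rw [hey, mul_one] at h1
    rw [← h1]; exact dself _
  have hlamnn : 0 ≤ lam := by
    have h1 : (βᵀ *ᵥ u3) ⬝ᵥ (βᵀ *ᵥ u3) = lam * (u3 ⬝ᵥ u3) := bdot β u3 u3 lam hlam
    rw [hu33, mul_one] at h1
    rw [← h1]; exact dself _
  set σ1 := Real.sqrt μ with hσ1def
  set σ2 := Real.sqrt ν with hσ2def
  set σ3 := Real.sqrt lam with hσ3def
  have hsq1 : σ1 ^ 2 = μ := Real.sq_sqrt hμnn
  have hsq2 : σ2 ^ 2 = ν := Real.sq_sqrt hνnn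
  have hsq3 : σ3 ^ 2 = lam := Real.sq_sqrt hlamnn
  have he1 : (β * βᵀ) *ᵥ ex = (σ1 ^ 2) • ex := by rw [hsq1]; exact hμ
  have he2 : (β * βᵀ) *ᵥ ey = (σ2 ^ 2) • ey := by rw [hsq2]; exact hν
  have he3 : (β * βᵀ) *ᵥ u3 = (σ3 ^ 2) • u3 := by rw [hsq3]; exact hlam
  have hσ1nn : 0 ≤ σ1 := Real.sqrt_nonneg _
  have hσ2nn : 0 ≤ σ2 := Real.sqrt_nonneg _
  have hσ3nn : 0 ≤ σ3 := Real.sqrt_nonneg _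
  obtain ⟨v1, v2, v3, hv11, hv22, hv33, hv12, hv13, hv23, hbv1, hbt1, hbv2, hbt2,
    hbv3, hbt3⟩ := vbasis β ex ey u3 σ1 σ2 σ3 hex hey hu33 hxy hu13 hu23
      hσ1nn hσ2nn hσ3nn he1 he2 he3
  set p1 := v1 ⬝ᵥ P with hp1def
  set p2 := v2 ⬝ᵥ P with hp2def
  set p3 := v3 ⬝ᵥ P with hp3def
  have hP : P = p1 • v1 + p2 • v2 + p3 • v3 :=
    expand3 v1 v2 v3 P hv11 hv22 hv33 hv12 hv13 hv23
  have hp3σ : σ3 * p3 = 0 := by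
    have h1 : σ3 * p3 = (βᵀ *ᵥ u3) ⬝ᵥ P := by
      rw [hbt3, smul_dotProduct, smul_eq_mul, hp3def]
    have h2 : (βᵀ *ᵥ u3) ⬝ᵥ P = u3 ⬝ᵥ (β *ᵥ P) := (dotmv β u3 P).symm
    rw [h1, h2, hbP, dotProduct_add, dotProduct_smul, dotProduct_smul,
      dotProduct_comm u3 ex, dotProduct_comm u3 ey, hu13, hu23]
    simp
  by_cases hp3 : p3 = 0
  · refine ⟨σ1, σ2, ex, ey, v1, v2, hex, hey, hxy, hv11, hv22, hv12,
      hbv1, hbt1, hbv2, hbt2, ⟨c1, c2, hS⟩, ⟨p1, p2, ?_⟩⟩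
    rw [hP, hp3]
    module
  · have hσ3z : σ3 = 0 := by
      rcases mul_eq_zero.mp hp3σ with h | h
      · exact h
      · exact absurd h hp3
    have pair3a : β *ᵥ v3 = (0:ℝ) • u3 := by rw [hbv3, hσ3z]
    have pair3b : βᵀ *ᵥ u3 = (0:ℝ) • v3 := by rw [hbt3, hσ3z]
    have hAv1 : (βᵀ * β) *ᵥ v1 = (σ1 ^ 2) • v1 := by
      rw [← Matrix.mulVec_mulVec, hbv1, Matrix.mulVec_smul, hbt1, smul_smul, ← pow_two]
    have hAv2 : (βᵀ * β) *ᵥ v2 = (σ2 ^ 2) • v2 := by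
      rw [← Matrix.mulVec_mulVec, hbv2, Matrix.mulVec_smul, hbt2, smul_smul, ← pow_two]
    have hAv3 : (βᵀ * β) *ᵥ v3 = (σ3 ^ 2) • v3 := by
      rw [← Matrix.mulVec_mulVec, hbv3, Matrix.mulVec_smul, hbt3, smul_smul, ← pow_two]
    have hAP : (βᵀ * β) *ᵥ P
        = (σ1 ^ 2 * p1) • v1 + (σ2 ^ 2 * p2) • v2 + (σ3 ^ 2 * p3) • v3 := by
      conv_lhs => rw [hP]
      rw [Matrix.mulVec_add, Matrix.mulVec_add, Matrix.mulVec_smul, Matrix.mulVec_smul,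
        Matrix.mulVec_smul, hAv1, hAv2, hAv3]
      module
    have hAAP : ((βᵀ * β) * (βᵀ * β)) *ᵥ P
        = (σ1 ^ 2 * (σ1 ^ 2 * p1)) • v1 + (σ2 ^ 2 * (σ2 ^ 2 * p2)) • v2
          + (σ3 ^ 2 * (σ3 ^ 2 * p3)) • v3 := by
      rw [← Matrix.mulVec_mulVec, hAP, Matrix.mulVec_add, Matrix.mulVec_add,
        Matrix.mulVec_smul, Matrix.mulVec_smul, Matrix.mulVec_smul, hAv1, hAv2, hAv3]
      module
    have hbTS : βᵀ *ᵥ S = (σ1 * c1) • v1 + (σ2 * c2) • v2 + (0:ℝ) • v3 := by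
      conv_lhs => rw [hS]
      rw [Matrix.mulVec_add, Matrix.mulVec_smul, Matrix.mulVec_smul, hbt1, hbt2]
      module
    have hABS : (βᵀ * β) *ᵥ (βᵀ *ᵥ S)
        = (σ1 ^ 2 * (σ1 * c1)) • v1 + (σ2 ^ 2 * (σ2 * c2)) • v2 + (0:ℝ) • v3 := by
      rw [hbTS, Matrix.mulVec_add, Matrix.mulVec_add, Matrix.mulVec_smul,
        Matrix.mulVec_smul, Matrix.mulVec_smul, hAv1, hAv2, hAv3]
      module
    have detA := trip0 v1 v2 v3 _ _ _ p1 p2 p3 (σ1 ^ 2 * p1) (σ2 ^ 2 * p2) (σ3 ^ 2 * p3)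
      (σ1 ^ 2 * (σ1 ^ 2 * p1)) (σ2 ^ 2 * (σ2 ^ 2 * p2)) (σ3 ^ 2 * (σ3 ^ 2 * p3))
      hv11 hv22 hv33 hv12 hv13 hv23 hP hAP hAAP h11
    have detB := trip0 v1 v2 v3 _ _ _ (σ1 * c1) (σ2 * c2) 0 p1 p2 p3
      (σ1 ^ 2 * p1) (σ2 ^ 2 * p2) (σ3 ^ 2 * p3)
      hv11 hv22 hv33 hv12 hv13 hv23 hbTS hP hAP h16
    have detC := trip0 v1 v2 v3 _ _ _ (σ1 * c1) (σ2 * c2) 0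
      (σ1 ^ 2 * (σ1 * c1)) (σ2 ^ 2 * (σ2 * c2)) 0 p1 p2 p3
      hv11 hv22 hv33 hv12 hv13 hv23 hbTS hABS hP h17
    rw [hσ3z] at detA detB
    simp [Matrix.det_fin_three, vecHead, vecTail] at detA detB detC
    have eqA : p1 * p2 * σ1 ^ 2 * σ2 ^ 2 * (σ2 ^ 2 - σ1 ^ 2) = 0 := by
      have h0 : p3 * (p1 * p2 * σ1 ^ 2 * σ2 ^ 2 * (σ2 ^ 2 - σ1 ^ 2)) = 0 := by
        linear_combination detA
      exact (mul_eq_zero.mp h0).resolve_left hp3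
    have eqB : σ1 * σ2 * (σ1 * c2 * p1 - σ2 * c1 * p2) = 0 := by
      have h0 : p3 * (σ1 * σ2 * (σ1 * c2 * p1 - σ2 * c1 * p2)) = 0 := by
        linear_combination detB
      exact (mul_eq_zero.mp h0).resolve_left hp3
    have eqC : σ1 * σ2 * c1 * c2 * (σ2 ^ 2 - σ1 ^ 2) = 0 := by
      have h0 : p3 * (σ1 * σ2 * c1 * c2 * (σ2 ^ 2 - σ1 ^ 2)) = 0 := by
        linear_combination detC
      exact (mul_eq_zero.mp h0).resolve_left hp3
    rcases hσ1nn.eq_or_lt with hz1 | hppos1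
    · -- σ1 = 0 : merge indices 1 and 3 for P
      obtain ⟨α, γ, r, hαγ, hpe1, hpe3⟩ := polar2 p1 p3
      refine ⟨σ2, 0, ey, ex, v2, α • v1 + γ • v3, hey, hex, ?_, hv22, ?_, ?_,
        hbv2, hbt2, ?_, ?_, ⟨c2, c1, ?_⟩, ⟨p2, r, ?_⟩⟩
      · rw [dotProduct_comm]; exact hxy
      · simp only [dotProduct_add, add_dotProduct, dotProduct_smul, smul_dotProduct,
          smul_eq_mul, hv11, hv33, hv13, dotProduct_comm v3 v1, mul_zero, mul_one,
          zero_add, add_zero]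
        linear_combination hαγ
      · simp only [dotProduct_add, dotProduct_smul, smul_eq_mul,
          dotProduct_comm v2 v1, hv12, hv23, mul_zero, add_zero]
      · rw [Matrix.mulVec_add, Matrix.mulVec_smul, Matrix.mulVec_smul, hbv1, hbv3,
          hσ3z, ← hz1]
        simp
      · rw [hbt1, ← hz1]; simp
      · rw [hS]; module
      · rw [hP, hpe1, hpe3]; module
    · rcases hσ2nn.eq_or_lt with hz2 | hppos2
      · -- σ2 = 0 : merge indices 2 and 3 for P
        obtain ⟨α, γ, r, hαγ, hpe2, hpe3⟩ := polar2 p2 p3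
        refine ⟨σ1, 0, ex, ey, v1, α • v2 + γ • v3, hex, hey, hxy, hv11, ?_, ?_,
          hbv1, hbt1, ?_, ?_, ⟨c1, c2, hS⟩, ⟨p1, r, ?_⟩⟩
        · simp only [dotProduct_add, add_dotProduct, dotProduct_smul, smul_dotProduct,
            smul_eq_mul, hv22, hv33, hv23, dotProduct_comm v3 v2, mul_zero, mul_one,
            zero_add, add_zero]
          linear_combination hαγ
        · simp only [dotProduct_add, dotProduct_smul, smul_eq_mul, hv12, hv13,
            mul_zero, add_zero]
        · rw [Matrix.mulVec_add, Matrix.mulVec_smul, Matrix.mulVec_smul, hbv2, hbv3,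
            hσ3z, ← hz2]
          simp
        · rw [hbt2, ← hz2]; simp
        · rw [hP, hpe2, hpe3]; module
      · -- σ1, σ2 > 0
        have hσ1ne : σ1 ≠ 0 := ne_of_gt hppos1
        have hσ2ne : σ2 ≠ 0 := ne_of_gt hppos2
        by_cases hσe : σ1 = σ2
        · -- equal singular values : rotate in the 1-2 plane
          by_cases hc : c1 = 0 ∧ c2 = 0
          · obtain ⟨α, γ, r, hαγ, hpe1, hpe2⟩ := polar2 p1 p2
            refine ⟨σ1, 0, α • ex + γ • ey, u3, α • v1 + γ • v2, v3, ?_, hu33, ?_, ?_,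
              hv33, ?_, ?_, ?_, pair3a, pair3b, ⟨0, 0, ?_⟩, ⟨r, p3, ?_⟩⟩
            · simp only [dotProduct_add, add_dotProduct, dotProduct_smul, smul_dotProduct,
                smul_eq_mul, hex, hey, hxy, dotProduct_comm ey ex, mul_zero, mul_one,
                zero_add, add_zero]
              linear_combination hαγ
            · simp only [add_dotProduct, smul_dotProduct, smul_eq_mul, hu13, hu23,
                mul_zero, add_zero]
            · simp only [dotProduct_add, add_dotProduct, dotProduct_smul, smul_dotProduct,
                smul_eq_mul, hv11, hv22, hv12, dotProduct_comm v2 v1, mul_zero, mul_one,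
                zero_add, add_zero]
              linear_combination hαγ
            · simp only [add_dotProduct, smul_dotProduct, smul_eq_mul, hv13, hv23,
                mul_zero, add_zero]
            · rw [Matrix.mulVec_add, Matrix.mulVec_smul, Matrix.mulVec_smul, hbv1, hbv2,
                ← hσe]
              module
            · rw [Matrix.mulVec_add, Matrix.mulVec_smul, Matrix.mulVec_smul, hbt1, hbt2,
                ← hσe]
              module
            · rw [hS, hc.1, hc.2]; module
            · rw [hP, hpe1, hpe2]; module
          · -- S ≠ 0 : rotate along S
            have hpar : c2 * p1 = c1 * p2 := by
              have h0 : (σ1 * σ1 * σ1) * (c2 * p1 - c1 * p2) = 0 := by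
                have h1 := eqB
                rw [← hσe] at h1
                linear_combination h1
              have h2 := (mul_eq_zero.mp h0).resolve_left
                (by positivity)
              linarith [sub_eq_zero.mp h2]
            obtain ⟨α, γ, r, hαγ, hce1, hce2⟩ := polar2 c1 c2
            have hrne : r ≠ 0 := by
              rintro rfl
              exact hc ⟨by rw [hce1]; ring, by rw [hce2]; ring⟩
            have hpar2 : γ * p1 = α * p2 := by
              apply mul_left_cancel₀ hrne
              have h := hpar
              rw [hce1, hce2] at h
              linear_combination h
            refine ⟨σ1, 0, α • ex + γ • ey, u3, α • v1 + γ • v2, v3, ?_, hu33, ?_, ?_,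
              hv33, ?_, ?_, ?_, pair3a, pair3b, ⟨r, 0, ?_⟩, ⟨α * p1 + γ * p2, p3, ?_⟩⟩
            · simp only [dotProduct_add, add_dotProduct, dotProduct_smul, smul_dotProduct,
                smul_eq_mul, hex, hey, hxy, dotProduct_comm ey ex, mul_zero, mul_one,
                zero_add, add_zero]
              linear_combination hαγ
            · simp only [add_dotProduct, smul_dotProduct, smul_eq_mul, hu13, hu23,
                mul_zero, add_zero]
            · simp only [dotProduct_add, add_dotProduct, dotProduct_smul, smul_dotProduct,
                smul_eq_mul, hv11, hv22, hv12, dotProduct_comm v2 v1, mul_zero, mul_one,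
                zero_add, add_zero]
              linear_combination hαγ
            · simp only [add_dotProduct, smul_dotProduct, smul_eq_mul, hv13, hv23,
                mul_zero, add_zero]
            · rw [Matrix.mulVec_add, Matrix.mulVec_smul, Matrix.mulVec_smul, hbv1, hbv2,
                ← hσe]
              module
            · rw [Matrix.mulVec_add, Matrix.mulVec_smul, Matrix.mulVec_smul, hbt1, hbt2,
                ← hσe]
              module
            · rw [hS, hce1, hce2]; module
            · rw [hP]
              match_scalars
              · linear_combination (-p1) * hαγ + γ * hpar2
              · linear_combination (-p2) * hαγ - α * hpar2
              · ring
        · -- distinct positive singular values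
          have hsne : σ2 ^ 2 - σ1 ^ 2 ≠ 0 := by
            intro h
            have h' : (σ2 - σ1) * (σ2 + σ1) = 0 := by linear_combination h
            rcases mul_eq_zero.mp h' with h'' | h''
            · exact hσe (by linarith)
            · linarith
          have hc12 : c1 * c2 = 0 := by
            have h0 : (σ1 * σ2 * (σ2 ^ 2 - σ1 ^ 2)) * (c1 * c2) = 0 := by
              linear_combination eqC
            exact (mul_eq_zero.mp h0).resolve_left
              (mul_ne_zero (mul_ne_zero hσ1ne hσ2ne) hsne)
          have hp12 : p1 * p2 = 0 := by
            have h0 : (σ1 ^ 2 * σ2 ^ 2 * (σ2 ^ 2 - σ1 ^ 2)) * (p1 * p2) = 0 := by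
              linear_combination eqA
            exact (mul_eq_zero.mp h0).resolve_left
              (mul_ne_zero (mul_ne_zero (pow_ne_zero 2 hσ1ne) (pow_ne_zero 2 hσ2ne)) hsne)
          have hB : σ1 * (c2 * p1) = σ2 * (c1 * p2) := by
            have h0 : (σ1 * σ2) * (σ1 * c2 * p1 - σ2 * c1 * p2) = 0 := by
              linear_combination eqB
            have h2 := (mul_eq_zero.mp h0).resolve_left (mul_ne_zero hσ1ne hσ2ne)
            linarith [sub_eq_zero.mp h2]
          rcases mul_eq_zero.mp hc12 with hc1z | hc2z
          · rcases mul_eq_zero.mp hp12 with hp1z | hp2z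
            · refine ⟨σ2, 0, ey, u3, v2, v3, hey, hu33, hu23, hv22, hv33, hv23,
                hbv2, hbt2, pair3a, pair3b, ⟨c2, 0, ?_⟩, ⟨p2, p3, ?_⟩⟩
              · rw [hS, hc1z]; module
              · rw [hP, hp1z]; module
            · have hcp : c2 * p1 = 0 := by
                have h0 : σ1 * (c2 * p1) = 0 := by
                  rw [hc1z, hp2z] at hB
                  linear_combination hB
                exact (mul_eq_zero.mp h0).resolve_left hσ1ne
              rcases mul_eq_zero.mp hcp with hc2z | hp1z
              · refine ⟨σ1, 0, ex, u3, v1, v3, hex, hu33, hu13, hv11, hv33, hv13,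
                  hbv1, hbt1, pair3a, pair3b, ⟨0, 0, ?_⟩, ⟨p1, p3, ?_⟩⟩
                · rw [hS, hc1z, hc2z]; module
                · rw [hP, hp2z]; module
              · refine ⟨σ2, 0, ey, u3, v2, v3, hey, hu33, hu23, hv22, hv33, hv23,
                  hbv2, hbt2, pair3a, pair3b, ⟨c2, 0, ?_⟩, ⟨p2, p3, ?_⟩⟩
                · rw [hS, hc1z]; module
                · rw [hP, hp1z]; module
          · rcases mul_eq_zero.mp hp12 with hp1z | hp2z
            · have hcp : c1 * p2 = 0 := by
                have h0 : σ2 * (c1 * p2) = 0 := by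
                  rw [hc2z, hp1z] at hB
                  linear_combination -hB
                exact (mul_eq_zero.mp h0).resolve_left hσ2ne
              rcases mul_eq_zero.mp hcp with hc1z | hp2z
              · refine ⟨σ2, 0, ey, u3, v2, v3, hey, hu33, hu23, hv22, hv33, hv23,
                  hbv2, hbt2, pair3a, pair3b, ⟨0, 0, ?_⟩, ⟨p2, p3, ?_⟩⟩
                · rw [hS, hc1z, hc2z]; module
                · rw [hP, hp1z]; module
              · refine ⟨σ1, 0, ex, u3, v1, v3, hex, hu33, hu13, hv11, hv33, hv13,
                  hbv1, hbt1, pair3a, pair3b, ⟨c1, 0, ?_⟩, ⟨p1, p3, ?_⟩⟩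
                · rw [hS, hc2z]; module
                · rw [hP, hp2z]; module
            · refine ⟨σ1, 0, ex, u3, v1, v3, hex, hu33, hu13, hv11, hv33, hv13,
                hbv1, hbt1, pair3a, pair3b, ⟨c1, 0, ?_⟩, ⟨p1, p3, ?_⟩⟩
              · rw [hS, hc2z]; module
              · rw [hP, hp2z]; module
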